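/- For all r, s, t ∈ ℝ⁴, the characteristic polynomial of the product matrix M_{rst} = M_r·M_s·M_t equals (x² − ‖r‖²‖s‖²‖t‖²)(x² + 2P(r,s,t)x + ‖r‖²‖s‖²‖t‖²), where P(r,s,t) = Re(qr·qs·qt). -/

import Mathlib

noncomputable section

open Real Polynomial

attribute [local instance] Matrix.frobeniusNormedAddCommGroup Matrix.frobeniusNormedSpace

/-- The quaternion corresponding to a vector in ℝ⁴. -/
def quat (t : EuclideanSpace ℝ (Fin 4)) : Quaternion ℝ := ⟨t 0, t 1, t 2, t 3⟩

/-- P(r,s,t) = Re(qr·qs·qt). -/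
def Pq (r s t : EuclideanSpace ℝ (Fin 4)) : ℝ := (quat r * quat s * quat t).re

/-- The 4×4 matrix M_s. -/
def Mmat (s : EuclideanSpace ℝ (Fin 4)) : Matrix (Fin 4) (Fin 4) ℝ :=
  !![s 0, -s 1, -s 2, -s 3;
     -s 1, -s 0, -s 3, s 2;
     -s 2, s 3, -s 0, -s 1;
     -s 3, -s 2, s 1, -s 0]

/-! `Mmat s` is the matrix, in the basis `1, i, j, k`, of `x ↦ conj (x * s)`. The composite of
three such maps is `x ↦ r̄ t̄ x̄ s`, i.e. right multiplication by `s` after `x ↦ conj (x * t r)`;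
since the characteristic polynomial of `f ∘ g` equals that of `g ∘ f`, we may swap the two
factors and obtain the single map `x ↦ conj (x * s t r)`. The characteristic polynomial of
`x ↦ conj (x * q)` is a direct 4 × 4 computation, and `|s t r| = |r| |s| |t|`,
`Re (s t r) = Re (r s t)`. -/

theorem LinearMap.charpoly_comp_comm {R M : Type*} [CommRing R] [AddCommGroup M] [Module R M]
    [Module.Free R M] [Module.Finite R M] (f g : M →ₗ[R] M) :
    (f ∘ₗ g).charpoly = (g ∘ₗ f).charpoly := by
  classical
  let b := Module.Free.chooseBasis R M
  rw [← charpoly_toMatrix (f ∘ₗ g) b, ← charpoly_toMatrix (g ∘ₗ f) b, toMatrix_comp b b b,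
    toMatrix_comp b b b, Matrix.charpoly_mul_comm]

namespace Quaternion

variable {R : Type*} [CommRing R]

theorem re_mul_comm (a b : ℍ[R]) : (a * b).re = (b * a).re := by
  simp only [re_mul]
  ring

def starMulRight (q : ℍ[R]) : ℍ[R] →ₗ[R] ℍ[R] where
  toFun x := star (x * q)
  map_add' x y := by rw [add_mul, star_add]
  map_smul' c x := by simp

@[simp]
theorem starMulRight_apply (q x : ℍ[R]) : starMulRight q x = star (x * q) := rfl

theorem starMulRight_comp_starMulRight_comp_starMulRight (a b c : ℍ[R]) :
    starMulRight a ∘ₗ starMulRight b ∘ₗ starMulRight c =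
      LinearMap.mulRight R b ∘ₗ starMulRight (c * a) :=
  LinearMap.ext fun x => by simp [mul_assoc]

theorem starMulRight_comp_mulRight (a b : ℍ[R]) :
    starMulRight a ∘ₗ LinearMap.mulRight R b = starMulRight (b * a) :=
  LinearMap.ext fun x => by simp [mul_assoc]

theorem charpoly_starMulRight_comp_starMulRight_comp_starMulRight (a b c : ℍ[R]) :
    (starMulRight a ∘ₗ starMulRight b ∘ₗ starMulRight c).charpoly =
      (starMulRight (b * c * a)).charpoly := by
  rw [starMulRight_comp_starMulRight_comp_starMulRight, LinearMap.charpoly_comp_comm,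
    starMulRight_comp_mulRight, mul_assoc]

def basisOneIJK : Module.Basis (Fin 4) R ℍ[R] :=
  .ofEquivFun { equivTuple R with
    map_add' _ _ := by ext i; fin_cases i <;> rfl
    map_smul' _ _ := by ext i; fin_cases i <;> rfl }

theorem toMatrix_starMulRight (q : ℍ[R]) :
    LinearMap.toMatrix basisOneIJK basisOneIJK (starMulRight q) =
      !![q.re, -q.imI, -q.imJ, -q.imK;
         -q.imI, -q.re, -q.imK, q.imJ;
         -q.imJ, q.imK, -q.re, -q.imI;
         -q.imK, -q.imJ, q.imI, -q.re] := by
  rw [← LinearEquiv.eq_symm_apply, LinearMap.toMatrix_symm]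
  refine LinearMap.ext fun x => basisOneIJK.repr.injective ?_
  ext i
  simp only [Matrix.repr_toLin]
  fin_cases i <;> simp [basisOneIJK, Matrix.mulVec, dotProduct, Fin.sum_univ_four] <;> ring

theorem charpoly_starMulRight (q : ℍ[R]) :
    (starMulRight q).charpoly =
      (X ^ 2 - C (normSq q)) * (X ^ 2 + C (2 * q.re) * X + C (normSq q)) := by
  rw [← LinearMap.charpoly_toMatrix _ basisOneIJK, toMatrix_starMulRight, Matrix.charpoly,
    Matrix.det_succ_row_zero]
  simp only [Fin.sum_univ_succ, Matrix.det_fin_three, Matrix.charmatrix_apply, Matrix.of_apply,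
    Matrix.submatrix_apply, Fin.succAbove, Matrix.cons_val', Matrix.cons_val,
    Matrix.cons_val_fin_one, Matrix.diagonal_apply_eq, Matrix.diagonal_apply_ne, Fin.isValue, Fin.reduceSucc,
    Fin.reduceCastSucc, Fin.reduceLT, Fin.reduceEq, ne_eq, not_false_eq_true, ↓reduceIte,
    Finset.univ_unique, Fin.default_eq_zero, Finset.sum_singleton, Fin.val_succ, Fin.val_zero,
    normSq_def', map_add, map_neg, map_pow, map_mul, C_ofNat]
  ring

end Quaternion

open Quaternion

theorem Mmat_eq_toMatrix (v : EuclideanSpace ℝ (Fin 4)) :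
    Mmat v = LinearMap.toMatrix basisOneIJK basisOneIJK (starMulRight (quat v)) :=
  (toMatrix_starMulRight (quat v)).symm

theorem normSq_quat (v : EuclideanSpace ℝ (Fin 4)) : normSq (quat v) = ‖v‖ ^ 2 := by
  rw [normSq_eq_norm_mul_self, ← sq]
  exact congrArg (· ^ 2) (linearIsometryEquivTuple.symm.norm_map v)

theorem stmt8 (r s t : EuclideanSpace ℝ (Fin 4)) :
    (Mmat r * Mmat s * Mmat t).charpoly =
      (X ^ 2 - C (‖r‖ ^ 2 * ‖s‖ ^ 2 * ‖t‖ ^ 2)) *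
        (X ^ 2 + C (2 * Pq r s t) * X + C (‖r‖ ^ 2 * ‖s‖ ^ 2 * ‖t‖ ^ 2)) := by
  have hnormSq : normSq (quat s * quat t * quat r) = ‖r‖ ^ 2 * ‖s‖ ^ 2 * ‖t‖ ^ 2 := by
    simp only [map_mul, normSq_quat]
    ring
  have hre : (quat s * quat t * quat r).re = Pq r s t := by
    rw [re_mul_comm, ← mul_assoc, Pq]
  rw [mul_assoc, Mmat_eq_toMatrix, Mmat_eq_toMatrix, Mmat_eq_toMatrix, ← LinearMap.toMatrix_comp,
    ← LinearMap.toMatrix_comp, LinearMap.charpoly_toMatrix,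
    charpoly_starMulRight_comp_starMulRight_comp_starMulRight, charpoly_starMulRight, hnormSq, hre]
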